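/- arXiv:0812.4312 — 3 statements merged into one kernel-verified Lean document; each statement's English description precedes it below -/
import Mathlib

section
/- Let U be a ring, let A be a left U-module admitting a resolution 0 → P_m → ⋯ → P_1 → P_0 → A → 0 by finitely generated projective left U-modules, and suppose there is d ≥ 0 such that Ext^n_U(A,U) = 0 for all n ≠ d. Then A admits a resolution 0 → Q_d → ⋯ → Q_1 → Q_0 → A → 0 of length d by finitely generated projective left U-modules; in particular the projective dimension of A is at most d. -/
/-!
Computing `Ext` with the given resolution, `Ext^n_U(A, U)` is the cohomology of the dual complex
`Hom_U(P, U)`, so the vanishing hypothesis makes this complex exact in all degrees above `d`.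
Descending from the top of the (finite) resolution, let `K n` be the `n`-th syzygy, `n ≥ d`: by
induction `K (n + 1)` is finitely generated projective, and dual exactness at `P (n + 1)` says
that every functional on `K (n + 1)` extends to `P n`. Hence `K (n + 1)` is a direct summand of
`P n`, and `K n ≅ P n / K (n + 1)` is finitely generated projective. Truncating the resolution at
`K d` gives a resolution of length `d`.
-/

open CategoryTheory

/-- `0 → P m → ⋯ → P 1 → P 0 → A → 0` is an exact sequence of left `U`-modules in which
every `P i` is a finitely generated projective module.  The sequence is encoded as an
`ℕ`-indexed complex whose modules in degrees `> m` are trivial. -/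
def IsFGProjResolution (U : Type) [Ring U] (A : Type) [AddCommGroup A] [Module U A]
    (m : ℕ) (P : ℕ → Type) [∀ i, AddCommGroup (P i)] [∀ i, Module U (P i)]
    (f : ∀ i, P (i + 1) →ₗ[U] P i) (ε : P 0 →ₗ[U] A) : Prop :=
  Function.Surjective ε ∧ Function.Exact (f 0) ε ∧
    (∀ i, Function.Exact (f (i + 1)) (f i)) ∧
    (∀ i, Module.Finite U (P i)) ∧ (∀ i, Module.Projective U (P i)) ∧
    ∀ i, m < i → Subsingleton (P i)

open Function LinearMap

section Splitting

variable {U : Type*} [Ring U] {N M K : Type*} [AddCommGroup N] [Module U N]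
  [AddCommGroup M] [Module U M] [AddCommGroup K] [Module U K]

/-- `N` is a retract `q ∘ σ = id` of some `U^n`; extending the coordinates of `σ` along `ι` and
composing with `q` retracts `ι`. -/
theorem LinearMap.exists_leftInverse_of_forall_exists_comp_eq [Module.Finite U N]
    [Module.Projective U N] (ι : N →ₗ[U] M)
    (hι : ∀ ψ : N →ₗ[U] U, ∃ φ : M →ₗ[U] U, φ ∘ₗ ι = ψ) :
    ∃ r : M →ₗ[U] N, r ∘ₗ ι = LinearMap.id := by
  obtain ⟨n, q, hq⟩ := Module.Finite.exists_fin' U N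
  obtain ⟨σ, hσ⟩ := Module.projective_lifting_property q LinearMap.id hq
  choose φ hφ using fun t : Fin n => hι (LinearMap.proj t ∘ₗ σ)
  have hφσ : LinearMap.pi φ ∘ₗ ι = σ := by
    ext x t
    exact LinearMap.congr_fun (hφ t) x
  refine ⟨q ∘ₗ LinearMap.pi φ, ?_⟩
  rw [LinearMap.comp_assoc, hφσ, hσ]

theorem Function.Exact.finite_projective_of_forall_exists_comp_eq [Module.Finite U N]
    [Module.Projective U N] [Module.Finite U M] [Module.Projective U M]
    {ι : N →ₗ[U] M} {p : M →ₗ[U] K} (h : Exact ι p) (hp : Surjective p)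
    (hι : ∀ ψ : N →ₗ[U] U, ∃ φ : M →ₗ[U] U, φ ∘ₗ ι = ψ) :
    Module.Finite U K ∧ Module.Projective U K := by
  obtain ⟨r, hr⟩ := ι.exists_leftInverse_of_forall_exists_comp_eq hι
  have hsplit := h.split_tfae'.out 1 0
  obtain ⟨-, s, hs⟩ := hsplit.mp ⟨hp, r, hr⟩
  exact ⟨.of_surjective p hp, .of_split s p hs⟩

theorem Function.Exact.subtype_range {ι : N →ₗ[U] M} {p : M →ₗ[U] K} (h : Exact ι p) :
    Exact (range ι).subtype p :=
  LinearMap.exact_iff.mpr <| (LinearMap.exact_iff.mp h).trans (Submodule.range_subtype _).symm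

end Splitting

section Resolutions

variable {U : Type} [Ring U] {A : Type} [AddCommGroup A] [Module U A]
  {P : ℕ → Type} [∀ i, AddCommGroup (P i)] [∀ i, Module U (P i)]
  {f : ∀ i, P (i + 1) →ₗ[U] P i} {ε : P 0 →ₗ[U] A}

variable (f) in
/-- Exactness of the dual complex `Hom_U(P, U)` at `Hom_U(P (n + 1), U)`. -/
def DualExactAt (n : ℕ) : Prop :=
  ∀ φ : P (n + 1) →ₗ[U] U, φ ∘ₗ f (n + 1) = 0 → ∃ ψ : P n →ₗ[U] U, ψ ∘ₗ f n = φ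

theorem DualExactAt.exists_comp_subtype_eq {n : ℕ} (hf : f n ∘ₗ f (n + 1) = 0)
    (hdual : DualExactAt f n) (ψ : range (f n) →ₗ[U] U) :
    ∃ φ : P n →ₗ[U] U, φ ∘ₗ (range (f n)).subtype = ψ := by
  obtain ⟨φ, hφ⟩ := hdual (ψ ∘ₗ (f n).rangeRestrict) <| by
    ext x
    have : (f n).rangeRestrict (f (n + 1) x) = 0 := Subtype.ext (LinearMap.congr_fun hf x)
    simp [this]
  refine ⟨φ, (LinearMap.cancel_right (f n).surjective_rangeRestrict).mp ?_⟩
  rwa [LinearMap.comp_assoc]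

namespace IsFGProjResolution

variable {m : ℕ}

theorem syzygy (hres : IsFGProjResolution U A m P f ε) :
    IsFGProjResolution U (range (f 0)) (m - 1) (fun i => P (i + 1)) (fun i => f (i + 1))
      (f 0).rangeRestrict := by
  obtain ⟨-, -, hex, hfin, hproj, hss⟩ := hres
  refine ⟨(f 0).surjective_rangeRestrict, ?_, fun i => hex (i + 1), fun i => hfin (i + 1),
    fun i => hproj (i + 1), fun i hi => hss (i + 1) (by omega)⟩
  rw [LinearMap.exact_iff, ker_rangeRestrict]
  exact LinearMap.exact_iff.mp (hex 0)

theorem finite_projective_of_syzygy (hres : IsFGProjResolution U A m P f ε)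
    (hdual : DualExactAt f 0) [Module.Finite U (range (f 0))]
    [Module.Projective U (range (f 0))] :
    Module.Finite U A ∧ Module.Projective U A := by
  obtain ⟨hε, hex0, hex, hfin, hproj, -⟩ := hres
  have := hfin 0
  have := hproj 0
  exact hex0.subtype_range.finite_projective_of_forall_exists_comp_eq hε
    (hdual.exists_comp_subtype_eq (hex 0).linearMap_comp_eq_zero)

theorem finite_projective_of_dualExact (hres : IsFGProjResolution U A m P f ε)
    (hdual : ∀ n, DualExactAt f n) : Module.Finite U A ∧ Module.Projective U A := by
  induction m generalizing A P with
  | zero =>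
    have : Subsingleton (P 1) := hres.2.2.2.2.2 1 zero_lt_one
    have : Subsingleton (range (f 0)) := (f 0).surjective_rangeRestrict.subsingleton
    exact hres.finite_projective_of_syzygy (hdual 0)
  | succ m ih =>
    obtain ⟨_, _⟩ := ih hres.syzygy fun n => hdual (n + 1)
    exact hres.finite_projective_of_syzygy (hdual 0)

theorem exists_zero [Module.Finite U A] [Module.Projective U A] :
    ∃ (Q : ℕ → ModuleCat U) (g : ∀ i, Q (i + 1) →ₗ[U] Q i) (η : Q 0 →ₗ[U] A),
      IsFGProjResolution U A 0 (fun i => Q i) g η := by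
  let Q : ℕ → ModuleCat U
    | 0 => .of U A
    | _ + 1 => .of U PUnit
  have hQ : ∀ i, Subsingleton (Q (i + 1)) := fun _ => inferInstanceAs (Subsingleton PUnit)
  refine ⟨Q, fun _ => 0, LinearMap.id, surjective_id, ?_, ?_, ?_, ?_, ?_⟩
  · exact (exact_zero_iff_injective _ _).mpr injective_id
  · exact fun i => (exact_zero_iff_injective _ _).mpr
      (@injective_of_subsingleton _ _ (hQ (i + 1)) _)
  · rintro (_ | i)
    · exact inferInstanceAs (Module.Finite U A)
    · infer_instance
  · rintro (_ | i)
    · exact inferInstanceAs (Module.Projective U A)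
    · infer_instance
  · rintro (_ | i) hi
    · omega
    · exact hQ i

theorem exists_cons {K M : Type} [AddCommGroup K] [Module U K] [AddCommGroup M] [Module U M]
    [Module.Finite U M] [Module.Projective U M] {ι : K →ₗ[U] M} {p : M →ₗ[U] A}
    (hι : Injective ι) (hp : Surjective p) (h : Exact ι p) {d : ℕ} {Q : ℕ → ModuleCat U}
    {g : ∀ i, Q (i + 1) →ₗ[U] Q i} {η : Q 0 →ₗ[U] K}
    (hres : IsFGProjResolution U K d (fun i => Q i) g η) :
    ∃ (Q' : ℕ → ModuleCat U) (g' : ∀ i, Q' (i + 1) →ₗ[U] Q' i) (η' : Q' 0 →ₗ[U] A),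
      IsFGProjResolution U A (d + 1) (fun i => Q' i) g' η' := by
  obtain ⟨hη, hex0, hex, hfin, hproj, hss⟩ := hres
  let Q' : ℕ → ModuleCat U
    | 0 => .of U M
    | i + 1 => Q i
  let g' : ∀ i, Q' (i + 1) →ₗ[U] Q' i
    | 0 => ι ∘ₗ η
    | i + 1 => g i
  refine ⟨Q', g', p, hp, ?_, ?_, ?_, ?_, ?_⟩
  · rw [LinearMap.exact_iff, LinearMap.exact_iff.mp h]
    exact (range_comp_of_range_eq_top ι (range_eq_top.mpr hη)).symm
  · rintro (_ | i)
    · rw [LinearMap.exact_iff]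
      exact (ker_comp_of_ker_eq_bot η (ker_eq_bot.mpr hι)).trans (LinearMap.exact_iff.mp hex0)
    · exact hex i
  · rintro (_ | i)
    · exact inferInstanceAs (Module.Finite U M)
    · exact hfin i
  · rintro (_ | i)
    · exact inferInstanceAs (Module.Projective U M)
    · exact hproj i
  · rintro (_ | i) hi
    · omega
    · exact hss i (by omega)

theorem exists_of_dualExact_ge (hres : IsFGProjResolution U A m P f ε) (d : ℕ)
    (hdual : ∀ n, d ≤ n → DualExactAt f n) :
    ∃ (Q : ℕ → ModuleCat U) (g : ∀ i, Q (i + 1) →ₗ[U] Q i) (η : Q 0 →ₗ[U] A),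
      IsFGProjResolution U A d (fun i => Q i) g η := by
  induction d generalizing m A P with
  | zero =>
    obtain ⟨_, _⟩ := hres.finite_projective_of_dualExact fun n => hdual n n.zero_le
    exact exists_zero
  | succ d ih =>
    obtain ⟨Q, g, η, hQ⟩ := ih hres.syzygy fun n hn => hdual (n + 1) (by omega)
    obtain ⟨hε, hex0, -, hfin, hproj, -⟩ := hres
    have := hfin 0
    have := hproj 0
    exact exists_cons (range (f 0)).injective_subtype hε hex0.subtype_range hQ

end IsFGProjResolution

section Ext

variable (f) in
noncomputable def linearChainComplex (hf : ∀ i, f i ∘ₗ f (i + 1) = 0) :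
    ChainComplex (ModuleCat U) ℕ :=
  ChainComplex.of (fun i => ModuleCat.of U (P i)) (fun i => ModuleCat.ofHom (f i))
    fun i => ModuleCat.hom_ext (hf i)

theorem linearChainComplex_d (hf : ∀ i, f i ∘ₗ f (i + 1) = 0) (i : ℕ) :
    (linearChainComplex f hf).d (i + 1) i = ModuleCat.ofHom (f i) := by
  simp [linearChainComplex]

theorem linearChainComplex_exactAt_succ {hf : ∀ i, f i ∘ₗ f (i + 1) = 0} {i : ℕ}
    (hex : Exact (f (i + 1)) (f i)) : (linearChainComplex f hf).ExactAt (i + 1) := by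
  rw [HomologicalComplex.exactAt_iff' _ (i + 1 + 1) (i + 1) i (by simp) (by simp),
    ShortComplex.ShortExact.moduleCat_exact_iff_function_exact]
  change Exact (ConcreteCategory.hom ((linearChainComplex f hf).d (i + 1 + 1) (i + 1)))
    (ConcreteCategory.hom ((linearChainComplex f hf).d (i + 1) i))
  rwa [linearChainComplex_d, linearChainComplex_d]

noncomputable def projectiveResolutionOfExact (hε : Surjective ε) (hex0 : Exact (f 0) ε)
    (hex : ∀ i, Exact (f (i + 1)) (f i)) (hproj : ∀ i, Module.Projective U (P i)) :
    ProjectiveResolution (ModuleCat.of U A) where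
  complex := linearChainComplex f fun i => (hex i).linearMap_comp_eq_zero
  projective n := (IsProjective.iff_projective (P n)).mp (hproj n)
  π := (ChainComplex.toSingle₀Equiv _ _).symm ⟨ModuleCat.ofHom ε, by
    rw [linearChainComplex_d]
    exact ModuleCat.hom_ext hex0.linearMap_comp_eq_zero⟩
  quasiIso := ⟨fun n => by
    cases n with
    | zero =>
      have hd := linearChainComplex_d (fun i => (hex i).linearMap_comp_eq_zero) 0
      rw [ChainComplex.quasiIsoAt₀_iff, ShortComplex.quasiIso_iff_of_zeros' _ rfl rfl rfl]
      constructor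
      · rw [ShortComplex.ShortExact.moduleCat_exact_iff_function_exact]
        simp only [HomologicalComplex.shortComplexFunctor', hd]
        exact hex0
      · exact (ModuleCat.epi_iff_surjective _).2 hε
    | succ n =>
      rw [quasiIsoAt_iff_exactAt' (hL := ChainComplex.exactAt_succ_single_obj ..)]
      exact linearChainComplex_exactAt_succ (hex n)⟩

theorem dualExactAt_of_subsingleton_ext (hε : Surjective ε) (hex0 : Exact (f 0) ε)
    (hex : ∀ i, Exact (f (i + 1)) (f i)) (hproj : ∀ i, Module.Projective U (P i)) {n : ℕ}
    (hExt : Subsingleton (((Ext ℤ (ModuleCat U) (n + 1)).obj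
      (Opposite.op (ModuleCat.of U A))).obj (ModuleCat.of U U))) :
    DualExactAt f n := by
  let R := projectiveResolutionOfExact hε hex0 hex hproj
  let D := R.complex.linearYonedaObj ℤ (ModuleCat.of U U)
  have hD : D.ExactAt (n + 1) := by
    rw [HomologicalComplex.exactAt_iff_isZero_homology]
    exact (ModuleCat.isZero_of_subsingleton _).of_iso (R.isoExt (n + 1) _).symm
  rw [HomologicalComplex.exactAt_iff' _ n (n + 1) (n + 2) (by simp) (by simp),
    ShortComplex.moduleCat_exact_iff] at hD
  have hRd (i : ℕ) : R.complex.d (i + 1) i = ModuleCat.ofHom (f i) :=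
    linearChainComplex_d (fun i => (hex i).linearMap_comp_eq_zero) i
  intro φ hφ
  obtain ⟨ψ, hψ⟩ := hD (ModuleCat.ofHom φ) <| by
    change D.d (n + 1) (n + 2) (ModuleCat.ofHom φ) = 0
    rw [ChainComplex.linearYonedaObj_d, hRd]
    exact ModuleCat.hom_ext hφ
  change D.d n (n + 1) ψ = _ at hψ
  rw [ChainComplex.linearYonedaObj_d, hRd] at hψ
  exact ⟨ψ.hom, congrArg ModuleCat.Hom.hom hψ⟩

end Ext

end Resolutions

/-- If a left `U`-module `A` admits a finite resolution by finitely generated projective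
modules and `Ext^n_U(A, U) = 0` for all `n ≠ d`, then `A` admits such a resolution of
length `d`; in particular the projective dimension of `A` is at most `d`. -/
theorem duality_module_has_resolution_of_length_d
    (U : Type) [Ring U] (A : Type) [AddCommGroup A] [Module U A]
    (m : ℕ) (P : ℕ → Type) [∀ i, AddCommGroup (P i)] [∀ i, Module U (P i)]
    (f : ∀ i, P (i + 1) →ₗ[U] P i) (ε : P 0 →ₗ[U] A)
    (hres : IsFGProjResolution U A m P f ε)
    (d : ℕ)
    (hvanish : ∀ n : ℕ, n ≠ d →
      Subsingleton (((Ext ℤ (ModuleCat U) n).obj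
        (Opposite.op (ModuleCat.of U A))).obj (ModuleCat.of U U))) :
    ∃ (Q : ℕ → ModuleCat U) (g : ∀ i, ↥(Q (i + 1)) →ₗ[U] ↥(Q i))
      (η : ↥(Q 0) →ₗ[U] A),
      IsFGProjResolution U A d (fun i => ↥(Q i)) g η := by
  have hdual : ∀ n, d ≤ n → DualExactAt f n := by
    obtain ⟨hε, hex0, hex, -, hproj, -⟩ := hres
    exact fun n hn =>
      dualExactAt_of_subsingleton_ext hε hex0 hex hproj (hvanish (n + 1) (by omega))
  exact hres.exists_of_dualExact_ge d hdual
end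

section
/- Let U = ℂ[a,b,c] and let Δ : U → V := U ⊗_ℂ U be the ℂ-algebra homomorphism with Δ(a) = a⊗a, Δ(b) = a⊗b + b⊗c, Δ(c) = c⊗c. Regard V as a U-module by restriction of scalars along Δ. Then V is not flat as a U-module; in particular, V is not projective as a U-module. -/
/-!
Let `I = (a, b, c)` be the augmentation ideal of `U`. The element
`t = a ⊗ (c ⊗ b) - b ⊗ (c ⊗ a) + c ⊗ (b ⊗ a)` of `I ⊗_U V` maps to `0` in `V`, because
`Δ(a)(c ⊗ b) - Δ(b)(c ⊗ a) + Δ(c)(b ⊗ a) = 0`. Yet `t ≠ 0`. Let `U` act on `ℂ` through `u ↦ u(0)`.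
On `I` the coefficient of `c` is `U`-linear into `ℂ`, and so is the coefficient of `b ⊗ a` on `V`,
because `Δ(a)`, `Δ(b)`, `Δ(c)` times any pure tensor has no `b ⊗ a` term. The product of
these two maps is a balanced pairing on `I × V` sending `t` to `1`. Hence `I ⊗_U V → V` is not
injective, and `V` is not flat.
-/

set_option synthInstance.maxHeartbeats 1000000
set_option maxHeartbeats 1000000

open TensorProduct MvPolynomial

noncomputable abbrev UU : Type := MvPolynomial (Fin 3) ℂ

noncomputable def Δ : UU →ₐ[ℂ] UU ⊗[ℂ] UU :=
  MvPolynomial.aeval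
    ![(X 0 : UU) ⊗ₜ[ℂ] (X 0 : UU),
      (X 0 : UU) ⊗ₜ[ℂ] (X 1 : UU) + (X 1 : UU) ⊗ₜ[ℂ] (X 2 : UU),
      (X 2 : UU) ⊗ₜ[ℂ] (X 2 : UU)]

noncomputable def restrictModule : Module UU (UU ⊗[ℂ] UU) :=
  Module.compHom _ Δ.toRingHom

namespace MvPolynomial

variable {σ R : Type*} [CommSemiring R]

theorem coeff_single_one_mul (j : σ) (p q : MvPolynomial σ R) :
    coeff (Finsupp.single j 1) (p * q) =
      constantCoeff p * coeff (Finsupp.single j 1) q +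
        coeff (Finsupp.single j 1) p * constantCoeff q := by
  classical
  rw [coeff_mul, Finsupp.antidiagonal_single]
  simp [Finset.Nat.antidiagonal_succ, constantCoeff_eq]

theorem coeff_single_one_X_mul {i j : σ} (h : i ≠ j) (p : MvPolynomial σ R) :
    coeff (Finsupp.single j 1) (X i * p) = 0 := by
  classical
  simp [coeff_X_mul', h]

end MvPolynomial

@[simp] lemma Δ_X_zero : Δ (X 0) = (X 0 : UU) ⊗ₜ[ℂ] (X 0 : UU) := by simp [Δ]

@[simp] lemma Δ_X_one :
    Δ (X 1) = (X 0 : UU) ⊗ₜ[ℂ] (X 1 : UU) + (X 1 : UU) ⊗ₜ[ℂ] (X 2 : UU) := by simp [Δ]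

@[simp] lemma Δ_X_two : Δ (X 2) = (X 2 : UU) ⊗ₜ[ℂ] (X 2 : UU) := by simp [Δ]

lemma Δ_syzygy :
    Δ (X 0) * ((X 2 : UU) ⊗ₜ[ℂ] (X 1 : UU)) - Δ (X 1) * ((X 2 : UU) ⊗ₜ[ℂ] (X 0 : UU)) +
      Δ (X 2) * ((X 1 : UU) ⊗ₜ[ℂ] (X 0 : UU)) = 0 := by
  simp only [Δ_X_zero, Δ_X_one, Δ_X_two, Algebra.TensorProduct.tmul_mul_tmul, add_mul]
  rw [mul_comm (X 1 : UU) (X 0), mul_comm (X 2 : UU) (X 1)]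
  abel

noncomputable def coeffBA : UU ⊗[ℂ] UU →ₗ[ℂ] ℂ :=
  lift ((LinearMap.mul ℂ ℂ).compl₁₂
    (lcoeff ℂ (Finsupp.single 1 1)) (lcoeff ℂ (Finsupp.single 0 1)))

@[simp] lemma coeffBA_tmul (p q : UU) :
    coeffBA (p ⊗ₜ q) = coeff (Finsupp.single 1 1) p * coeff (Finsupp.single 0 1) q := rfl

lemma coeffBA_Δ_X_mul (i : Fin 3) (v : UU ⊗[ℂ] UU) : coeffBA (Δ (X i) * v) = 0 := by
  induction v using TensorProduct.induction_on with
  | zero => simp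
  | tmul p q =>
    fin_cases i <;>
      simp [Algebra.TensorProduct.tmul_mul_tmul, add_mul, coeff_single_one_X_mul]
  | add x y hx hy => rw [mul_add, map_add, hx, hy, add_zero]

lemma coeffBA_Δ_mul (u : UU) (v : UU ⊗[ℂ] UU) :
    coeffBA (Δ u * v) = constantCoeff u * coeffBA v := by
  induction u using MvPolynomial.induction_on generalizing v with
  | C r =>
    rw [show Δ (C r) = algebraMap ℂ _ r from Δ.commutes r, ← Algebra.smul_def, map_smul,
      constantCoeff_C, smul_eq_mul]
  | add p q hp hq => rw [map_add, add_mul, map_add, hp, hq, map_add, add_mul]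
  | mul_X p i hp =>
    rw [map_mul Δ, mul_assoc, hp, coeffBA_Δ_X_mul, map_mul constantCoeff, constantCoeff_X]
    ring

/-- `V` with `U` acting through `Δ`; a type synonym, since `U ⊗[ℂ] U` already carries the
`U`-module structure through the left factor. -/
def TensorSquare : Type := UU ⊗[ℂ] UU

noncomputable instance : AddCommGroup TensorSquare :=
  inferInstanceAs (AddCommGroup (UU ⊗[ℂ] UU))

noncomputable instance : Module UU TensorSquare := restrictModule

noncomputable def TensorSquare.tmul (p q : UU) : TensorSquare := p ⊗ₜ[ℂ] q

def CounitAlgebra : Type := ℂ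

noncomputable instance : CommRing CounitAlgebra := inferInstanceAs (CommRing ℂ)

noncomputable instance : Algebra UU CounitAlgebra := (constantCoeff : UU →+* ℂ).toAlgebra

noncomputable abbrev augmentationIdeal : Ideal UU := RingHom.ker constantCoeff

noncomputable def augX (i : Fin 3) : augmentationIdeal := ⟨X i, constantCoeff_X ℂ i⟩

noncomputable def augmentationIdeal.coeffX (j : Fin 3) :
    augmentationIdeal →ₗ[UU] CounitAlgebra where
  toFun x := (coeff (Finsupp.single j 1) (x : UU) : ℂ)
  map_add' x y := coeff_add _ (x : UU) y
  map_smul' u x := by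
    change coeff _ (u * (x : UU)) = constantCoeff u * coeff _ (x : UU)
    rw [coeff_single_one_mul, RingHom.mem_ker.mp x.2, mul_zero, add_zero]

noncomputable def TensorSquare.coeffBA : TensorSquare →ₗ[UU] CounitAlgebra where
  toFun v := (_root_.coeffBA v : ℂ)
  map_add' := map_add _root_.coeffBA
  map_smul' := coeffBA_Δ_mul

noncomputable def pairing : augmentationIdeal ⊗[UU] TensorSquare →ₗ[UU] CounitAlgebra :=
  lift ((LinearMap.mul UU CounitAlgebra).compl₁₂
    (augmentationIdeal.coeffX 2) TensorSquare.coeffBA)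

noncomputable def syzygy : augmentationIdeal ⊗[UU] TensorSquare :=
  augX 0 ⊗ₜ TensorSquare.tmul (X 2) (X 1) - augX 1 ⊗ₜ TensorSquare.tmul (X 2) (X 0) +
    augX 2 ⊗ₜ TensorSquare.tmul (X 1) (X 0)

lemma rTensor_syzygy : augmentationIdeal.subtype.rTensor TensorSquare syzygy = 0 := by
  apply (TensorProduct.lid UU TensorSquare).injective
  simp only [syzygy, map_add, map_sub, LinearMap.rTensor_tmul, Submodule.coe_subtype, lid_tmul,
    map_zero]
  exact Δ_syzygy

lemma pairing_syzygy : pairing syzygy = 1 := by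
  simp only [pairing, syzygy, map_add, map_sub, lift.tmul, LinearMap.compl₁₂_apply,
    LinearMap.mul_apply']
  change coeff _ (X 0) * coeffBA (X 2 ⊗ₜ X 1) - coeff _ (X 1) * coeffBA (X 2 ⊗ₜ X 0) +
    coeff _ (X 2) * coeffBA (X 1 ⊗ₜ X 0) = (1 : ℂ)
  simp [coeff_X, Finsupp.single_left_inj]

lemma syzygy_ne_zero : syzygy ≠ 0 := fun h =>
  zero_ne_one (α := ℂ) <| (map_zero pairing).symm.trans (h ▸ pairing_syzygy)

lemma TensorSquare.not_flat : ¬ Module.Flat UU TensorSquare := fun hflat =>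
  syzygy_ne_zero <| Module.Flat.iff_rTensor_injective'.mp hflat _ <| by
    rw [rTensor_syzygy, map_zero]

/-- For `U = ℂ[a,b,c]` with the comultiplication `Δ(a) = a ⊗ a`,
`Δ(b) = a ⊗ b + b ⊗ c`, `Δ(c) = c ⊗ c`, the module `V = U ⊗_ℂ U`, with `U` acting via
`Δ`, is not flat, and in particular not projective, as a `U`-module. -/
theorem tensor_square_not_flat_not_projective :
    ¬ @Module.Flat UU (UU ⊗[ℂ] UU) _ _ restrictModule ∧
      ¬ @Module.Projective UU _ (UU ⊗[ℂ] UU) _ restrictModule :=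
  ⟨TensorSquare.not_flat, fun h =>
    TensorSquare.not_flat (@Module.Flat.of_projective _ TensorSquare _ _ _ h)⟩
end

section
/- Let R := ℂ[y₁, y₂, y₃, y₄, y₅, y₆]/(y₁y₄, y₁y₅ + y₂y₆, y₃y₆) and let 𝔪 ⊂ R be the maximal ideal generated by the classes of y₁, …, y₆. Then the Krull dimension of the localization R_𝔪 is at least 4 (and in particular the Krull dimension of R is at least 4). -/
open MvPolynomial

/-- The defining ideal `(y₁y₄, y₁y₅ + y₂y₆, y₃y₆)` of the fibre over the origin of the
semigroup law of upper triangular `2×2`-matrices (variables `y₁,…,y₆` are `X 0,…,X 5`). -/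
noncomputable def relIdeal : Ideal (MvPolynomial (Fin 6) ℂ) :=
  Ideal.span {X 0 * X 3, X 0 * X 4 + X 1 * X 5, X 2 * X 5}

/-- The ring `R = ℂ[y₁,…,y₆]/(y₁y₄, y₁y₅ + y₂y₆, y₃y₆)`. -/
noncomputable abbrev RR : Type := MvPolynomial (Fin 6) ℂ ⧸ relIdeal

/-- The maximal ideal `𝔪 = (y₁,…,y₆)` of `R`, corresponding to the origin. -/
noncomputable def 𝔪 : Ideal RR :=
  Ideal.span (Set.range fun i : Fin 6 => Ideal.Quotient.mk relIdeal (X i))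

/-- Killing the variables in `s`. -/
noncomputable def phiMap (s : Finset (Fin 6)) :
    MvPolynomial (Fin 6) ℂ →ₐ[ℂ] MvPolynomial (Fin 6) ℂ :=
  aeval (fun i => if i ∈ s then 0 else X i)

lemma sub_phi_mem (s : Finset (Fin 6)) (f : MvPolynomial (Fin 6) ℂ) :
    f - phiMap s f ∈ Ideal.span (X '' (↑s : Set (Fin 6))) := by
  induction f using MvPolynomial.induction_on with
  | C a => simp [phiMap]
  | add p q hp hq =>
      have : p + q - phiMap s (p + q) = (p - phiMap s p) + (q - phiMap s q) := by
        rw [map_add]; ring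
      rw [this]; exact add_mem hp hq
  | mul_X p i hp =>
      by_cases hi : i ∈ s
      · have hXi : (X i : MvPolynomial (Fin 6) ℂ) ∈ Ideal.span (X '' (↑s : Set (Fin 6)) : Set (MvPolynomial (Fin 6) ℂ)) :=
          Ideal.subset_span ⟨i, by simpa using hi, rfl⟩
        have : phiMap s (X i) = 0 := by simp [phiMap, hi]
        rw [map_mul, this, mul_zero, sub_zero]
        exact Ideal.mul_mem_left _ _ hXi
      · have : phiMap s (X i) = X i := by simp [phiMap, hi]
        rw [map_mul, this]
        have : p * X i - phiMap s p * X i = (p - phiMap s p) * X i := by ring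
        rw [this]
        exact Ideal.mul_mem_right _ _ hp

lemma span_eq_ker (s : Finset (Fin 6)) :
    Ideal.span (X '' (↑s : Set (Fin 6))) = RingHom.ker (phiMap s).toRingHom := by
  apply le_antisymm
  · rw [Ideal.span_le]
    rintro _ ⟨i, hi, rfl⟩
    simp only [Finset.coe_sort_coe, SetLike.mem_coe, RingHom.mem_ker]
    simp [phiMap, Finset.mem_coe.mp hi]
  · intro f hf
    have h0 : phiMap s f = 0 := hf
    have := sub_phi_mem s f
    rwa [h0, sub_zero] at this

lemma span_isPrime (s : Finset (Fin 6)) :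
    (Ideal.span (X '' (↑s : Set (Fin 6)) : Set (MvPolynomial (Fin 6) ℂ))).IsPrime := by
  rw [span_eq_ker]
  exact RingHom.ker_isPrime _

lemma X_notMem_span {s : Finset (Fin 6)} {j : Fin 6} (hj : j ∉ s) :
    (X j : MvPolynomial (Fin 6) ℂ) ∉ Ideal.span (X '' (↑s : Set (Fin 6)) : Set (MvPolynomial (Fin 6) ℂ)) := by
  rw [span_eq_ker]
  intro h
  have : phiMap s (X j) = 0 := h
  rw [phiMap, aeval_X, if_neg hj] at this
  exact X_ne_zero j this

/-- The chain of variable sets. -/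
def chainSet : Fin 5 → Finset (Fin 6)
  | 0 => {0, 5}
  | 1 => {0, 1, 5}
  | 2 => {0, 1, 2, 5}
  | 3 => {0, 1, 2, 3, 5}
  | 4 => Finset.univ

/-- The chain of prime ideals in the polynomial ring. -/
noncomputable def chainIdeal (k : Fin 5) : Ideal (MvPolynomial (Fin 6) ℂ) :=
  Ideal.span (X '' (↑(chainSet k) : Set (Fin 6)))

lemma chainIdeal_mono {k l : Fin 5} (h : k ≤ l) : chainIdeal k ≤ chainIdeal l := by
  apply Ideal.span_mono
  apply Set.image_mono
  intro x hx
  fin_cases k <;> fin_cases l <;> simp_all [chainSet] <;> omega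

lemma chainIdeal_strictMono : StrictMono chainIdeal := by
  have step : ∀ k k' : Fin 5, k ≤ k' → ∀ j : Fin 6, j ∈ chainSet k' → j ∉ chainSet k →
      ∀ l : Fin 5, k' ≤ l → chainIdeal k < chainIdeal l := by
    intro k k' hkk' j hj1 hj2 l hl
    refine lt_of_lt_of_le ?_ (chainIdeal_mono hl)
    refine lt_of_le_of_ne (chainIdeal_mono hkk') ?_
    intro heq
    have hmem : X j ∈ chainIdeal k' :=
      Ideal.subset_span ⟨j, by simpa using hj1, rfl⟩
    rw [← heq] at hmem
    exact X_notMem_span hj2 hmem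
  intro k l hkl
  fin_cases k <;> fin_cases l <;> first
    | exact step 0 1 (by decide) 1 (by decide) (by decide) _ (by decide)
    | exact step 1 2 (by decide) 2 (by decide) (by decide) _ (by decide)
    | exact step 2 3 (by decide) 3 (by decide) (by decide) _ (by decide)
    | exact step 3 4 (by decide) 4 (by decide) (by decide) _ (by decide)
    | simp at hkl

lemma relIdeal_le_chainIdeal (k : Fin 5) : relIdeal ≤ chainIdeal k := by
  refine le_trans ?_ (chainIdeal_mono (Fin.zero_le k))
  rw [relIdeal, Ideal.span_le]
  have h0 : X (0 : Fin 6) ∈ chainIdeal 0 :=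
    Ideal.subset_span ⟨0, by simp [chainSet], rfl⟩
  have h5 : X (5 : Fin 6) ∈ chainIdeal 0 :=
    Ideal.subset_span ⟨5, by simp [chainSet], rfl⟩
  rintro x hx
  simp only [Set.mem_insert_iff, Set.mem_singleton_iff] at hx
  rcases hx with rfl | rfl | rfl
  · exact Ideal.mul_mem_right _ _ h0
  · exact add_mem (Ideal.mul_mem_right _ _ h0) (Ideal.mul_mem_left _ _ h5)
  · exact Ideal.mul_mem_left _ _ h5

/-- The chain of primes in the quotient ring. -/
noncomputable def chainQ (k : Fin 5) : Ideal RR :=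
  Ideal.map (Ideal.Quotient.mk relIdeal) (chainIdeal k)

lemma chainQ_isPrime (k : Fin 5) : (chainQ k).IsPrime := by
  refine Ideal.map_isPrime_of_surjective (H := span_isPrime _) Ideal.Quotient.mk_surjective ?_
  rw [Ideal.mk_ker]
  exact relIdeal_le_chainIdeal k

lemma comap_chainQ (k : Fin 5) :
    Ideal.comap (Ideal.Quotient.mk relIdeal) (chainQ k) = chainIdeal k := by
  rw [chainQ, Ideal.comap_map_of_surjective _ Ideal.Quotient.mk_surjective]
  rw [← RingHom.ker_eq_comap_bot, Ideal.mk_ker]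
  exact sup_eq_left.mpr (relIdeal_le_chainIdeal k)

lemma chainQ_strictMono : StrictMono chainQ := by
  intro k l hkl
  have hle : chainQ k ≤ chainQ l := Ideal.map_mono (chainIdeal_strictMono hkl).le
  refine lt_of_le_of_ne hle ?_
  intro heq
  have := comap_chainQ k
  rw [heq, comap_chainQ l] at this
  exact (chainIdeal_strictMono hkl).ne' this

lemma chainQ_le_m (k : Fin 5) : chainQ k ≤ 𝔪 := by
  rw [chainQ, Ideal.map_le_iff_le_comap]
  rw [chainIdeal, Ideal.span_le]
  rintro _ ⟨i, _, rfl⟩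
  exact Ideal.subset_span ⟨i, rfl⟩

set_option maxHeartbeats 1000000 in
set_option synthInstance.maxHeartbeats 1000000 in
/-- The Krull dimension of the localization `R_𝔪` — equivalently, of the poset of prime
ideals of `R` contained in `𝔪` — is at least `4`; in particular the Krull dimension of
`R` itself is at least `4`. -/
theorem krullDim_localization_at_origin_ge_four :
    4 ≤ Order.krullDim {p : PrimeSpectrum RR // p.asIdeal ≤ 𝔪} ∧
      4 ≤ ringKrullDim RR := by
  have hchain : StrictMono (fun k : Fin 5 =>
      (⟨⟨chainQ k, chainQ_isPrime k⟩, chainQ_le_m k⟩ :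
        {p : PrimeSpectrum RR // p.asIdeal ≤ 𝔪})) := by
    intro k l hkl
    exact chainQ_strictMono hkl
  have h1 : 4 ≤ Order.krullDim {p : PrimeSpectrum RR // p.asIdeal ≤ 𝔪} := by
    have := Order.LTSeries.length_le_krullDim (LTSeries.mk 4 _ hchain)
    simpa using this
  refine ⟨h1, le_trans h1 ?_⟩
  exact Order.krullDim_le_of_strictMono Subtype.val (fun _ _ h => h)
end
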